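/- arXiv:2110.02885 — 4 statements merged into one kernel-verified Lean document; each statement's English description precedes it below -/
import Mathlib

section
/- Suppose X is asymmetric, both its right and left tails are Weibull-tail, and |X| is Weibull-tail on ℝ₊ with parameter β. Then at least one of the two tails of X is Weibull-tail with parameter exactly β, and the other tail is Weibull-tail with parameter β' ≥ β. -/
open MeasureTheory Filter Real Finset

noncomputable section

/-- A positive function `l` on `(0,∞)` is slowly varying if `l(tx)/l(x) → 1` as `x → ∞`
for every `t > 0`. -/
def SlowlyVarying (l : ℝ → ℝ) : Prop :=
  (∀ x : ℝ, 0 < x → 0 < l x) ∧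
    ∀ t : ℝ, 0 < t → Tendsto (fun x : ℝ => l (t * x) / l x) atTop (nhds 1)

/-- A positive function `r` is regularly varying with index `ρ` if `r(tx)/r(x) → t^ρ`. -/
def RegularlyVarying (r : ℝ → ℝ) (ρ : ℝ) : Prop :=
  (∀ᶠ x in atTop, 0 < r x) ∧
    ∀ t : ℝ, 0 < t → Tendsto (fun x : ℝ => r (t * x) / r x) atTop (nhds (t ^ ρ))

/-- Survival function `P(X ≥ x)`. -/
def survival {Ω : Type*} [MeasurableSpace Ω] (μ : Measure Ω) (X : Ω → ℝ) (x : ℝ) : ℝ :=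
  (μ {ω | x ≤ X ω}).toReal

/-- `X` is generalized Weibull-tail on `ℝ₊` with tail parameter `β`:
its survival function is sandwiched between Weibull-tail functions with parameter `β`
for `x` large enough. -/
def GWTpos {Ω : Type*} [MeasurableSpace Ω] (μ : Measure Ω) (X : Ω → ℝ) (β : ℝ) : Prop :=
  ∃ l₁ l₂ : ℝ → ℝ, SlowlyVarying l₁ ∧ SlowlyVarying l₂ ∧
    ∀ᶠ x in atTop, Real.exp (-(x ^ β * l₁ x)) ≤ survival μ X x ∧
      survival μ X x ≤ Real.exp (-(x ^ β * l₂ x))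

/-- `X` is generalized Weibull-tail on `ℝ` with tail parameter `β`: both its right tail
`P(X ≥ x)` and its left tail `P(X ≤ -x) = P(-X ≥ x)` are sandwiched between
Weibull-tail functions with parameter `β`. -/
def GWTreal {Ω : Type*} [MeasurableSpace Ω] (μ : Measure Ω) (X : Ω → ℝ) (β : ℝ) : Prop :=
  GWTpos μ X β ∧ GWTpos μ (fun ω => -X ω) β

/-- `X` is Weibull-tail on `ℝ₊` with tail parameter `β`: `P(X ≥ x) = exp (-x^β l(x))`
for `x > 0`, with `l` slowly varying. -/
def WTpos {Ω : Type*} [MeasurableSpace Ω] (μ : Measure Ω) (X : Ω → ℝ) (β : ℝ) : Prop :=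
  ∃ l : ℝ → ℝ, SlowlyVarying l ∧ ∀ x : ℝ, 0 < x →
    survival μ X x = Real.exp (-(x ^ β * l x))

/-- `X` is Weibull-tail on `ℝ` with tail parameter `β`: both tails are Weibull-tail. -/
def WTreal {Ω : Type*} [MeasurableSpace Ω] (μ : Measure Ω) (X : Ω → ℝ) (β : ℝ) : Prop :=
  WTpos μ X β ∧ WTpos μ (fun ω => -X ω) β

/-- `X` is symmetric: `X` and `-X` have the same distribution. -/
def SymmetricRV {Ω : Type*} [MeasurableSpace Ω] (μ : Measure Ω) (X : Ω → ℝ) : Prop :=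
  Measure.map X μ = Measure.map (fun ω => -X ω) μ

private lemma geom_contra (u v : ℝ → ℝ) (θ₁ θ₂ C : ℝ) (h1 : 1 < θ₁) (h12 : θ₁ < θ₂)
    (hu : ∀ᶠ x in atTop, θ₂ * u x ≤ u (2 * x))
    (hv : ∀ᶠ x in atTop, v (2 * x) ≤ θ₁ * v x)
    (huv : ∀ᶠ x in atTop, u x ≤ v x + C)
    (hupos : ∀ᶠ x in atTop, 0 < u x) : False := by
  obtain ⟨X₀, hX⟩ := eventually_atTop.mp (((hu.and hv).and (huv.and hupos)))
  set x₀ : ℝ := max X₀ 1 with hx₀def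
  have hx₀1 : (1:ℝ) ≤ x₀ := le_max_right _ _
  have hθ₁0 : (0:ℝ) < θ₁ := lt_trans one_pos h1
  have hθ₂0 : (0:ℝ) < θ₂ := lt_trans hθ₁0 h12
  have hbase : ∀ n : ℕ, X₀ ≤ 2 ^ n * x₀ := by
    intro n
    have h2n : (1:ℝ) ≤ 2 ^ n := one_le_pow₀ (by norm_num)
    calc X₀ ≤ x₀ := le_max_left _ _
      _ = 1 * x₀ := (one_mul _).symm
      _ ≤ 2 ^ n * x₀ := by
          exact mul_le_mul_of_nonneg_right h2n (le_trans zero_le_one hx₀1)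
  have hun : ∀ n : ℕ, θ₂ ^ n * u x₀ ≤ u (2 ^ n * x₀) := by
    intro n
    induction n with
    | zero => simp
    | succ n ih =>
      have h := (hX (2 ^ n * x₀) (hbase n)).1.1
      have : (2:ℝ) ^ (n+1) * x₀ = 2 * (2 ^ n * x₀) := by ring
      rw [this, pow_succ]
      calc θ₂ ^ n * θ₂ * u x₀ = θ₂ * (θ₂ ^ n * u x₀) := by ring
        _ ≤ θ₂ * u (2 ^ n * x₀) := by
            exact mul_le_mul_of_nonneg_left ih hθ₂0.le
        _ ≤ u (2 * (2 ^ n * x₀)) := h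
  have hvn : ∀ n : ℕ, v (2 ^ n * x₀) ≤ θ₁ ^ n * v x₀ := by
    intro n
    induction n with
    | zero => simp
    | succ n ih =>
      have h := (hX (2 ^ n * x₀) (hbase n)).1.2
      have h2 : (2:ℝ) ^ (n+1) * x₀ = 2 * (2 ^ n * x₀) := by ring
      rw [h2, pow_succ]
      calc v (2 * (2 ^ n * x₀)) ≤ θ₁ * v (2 ^ n * x₀) := h
      _ ≤ θ₁ * (θ₁ ^ n * v x₀) := mul_le_mul_of_nonneg_left ih hθ₁0.le
      _ = θ₁ ^ n * θ₁ * v x₀ := by ring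
  have hkey : ∀ n : ℕ, u x₀ ≤ (θ₁/θ₂) ^ n * v x₀ + C * (1/θ₂) ^ n := by
    intro n
    have h1' : θ₂ ^ n * u x₀ ≤ θ₁ ^ n * v x₀ + C :=
      le_trans (hun n) (le_trans (hX _ (hbase n)).2.1 (by
        have := hvn n; linarith))
    have hp : (0:ℝ) < θ₂ ^ n := pow_pos hθ₂0 n
    rw [div_pow, one_div, inv_pow]
    calc u x₀ = θ₂ ^ n * u x₀ / θ₂ ^ n := by field_simp
      _ ≤ (θ₁ ^ n * v x₀ + C) / θ₂ ^ n := by gcongr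
      _ = θ₁ ^ n / θ₂ ^ n * v x₀ + C * (θ₂ ^ n)⁻¹ := by ring
  have hten : Tendsto (fun n : ℕ => (θ₁/θ₂) ^ n * v x₀ + C * (1/θ₂) ^ n) atTop (nhds 0) := by
    have h1t : Tendsto (fun n : ℕ => (θ₁/θ₂) ^ n) atTop (nhds 0) := by
      apply tendsto_pow_atTop_nhds_zero_of_lt_one (by positivity)
      rw [div_lt_one hθ₂0]; exact h12
    have h2t : Tendsto (fun n : ℕ => (1/θ₂) ^ n) atTop (nhds 0) := by
      apply tendsto_pow_atTop_nhds_zero_of_lt_one (by positivity)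
      rw [div_lt_one hθ₂0]; exact lt_trans h1 h12
    have := ((h1t.mul_const (v x₀)).add (h2t.const_mul C))
    simpa using this
  have hle : u x₀ ≤ 0 := ge_of_tendsto' hten hkey
  have := (hX x₀ (le_max_left _ _)).2.2
  linarith

private lemma ratio_lower (l : ℝ → ℝ) (hl : SlowlyVarying l) (γ θ : ℝ)
    (hθ : θ < 2 ^ γ) :
    ∀ᶠ x in atTop, θ * (x ^ γ * l x) ≤ (2 * x) ^ γ * l (2 * x) := by
  have h2 : (0:ℝ) < 2 ^ γ := rpow_pos_of_pos two_pos γ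
  have hc : θ / 2 ^ γ < 1 := (div_lt_one h2).mpr hθ
  have hev := (hl.2 2 two_pos).eventually (eventually_gt_nhds hc)
  filter_upwards [hev, eventually_gt_atTop 0] with x h hx
  have hlx : 0 < l x := hl.1 x hx
  rw [lt_div_iff₀ hlx] at h
  have hxγ : 0 < x ^ γ := rpow_pos_of_pos hx γ
  rw [mul_rpow (by norm_num : (0:ℝ) ≤ 2) hx.le]
  have key : 2 ^ γ * x ^ γ * (θ / 2 ^ γ * l x) ≤ 2 ^ γ * x ^ γ * l (2 * x) :=
    mul_le_mul_of_nonneg_left h.le (by positivity)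
  have : 2 ^ γ * x ^ γ * (θ / 2 ^ γ * l x) = θ * (x ^ γ * l x) := by
    field_simp
  linarith [key, this ▸ key]

private lemma ratio_upper (l : ℝ → ℝ) (hl : SlowlyVarying l) (γ θ : ℝ)
    (hθ : 2 ^ γ < θ) :
    ∀ᶠ x in atTop, (2 * x) ^ γ * l (2 * x) ≤ θ * (x ^ γ * l x) := by
  have h2 : (0:ℝ) < 2 ^ γ := rpow_pos_of_pos two_pos γ
  have hc : (1:ℝ) < θ / 2 ^ γ := (one_lt_div h2).mpr hθ
  have hev := (hl.2 2 two_pos).eventually (eventually_lt_nhds hc)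
  filter_upwards [hev, eventually_gt_atTop 0] with x h hx
  have hlx : 0 < l x := hl.1 x hx
  rw [div_lt_iff₀ hlx] at h
  have hxγ : 0 < x ^ γ := rpow_pos_of_pos hx γ
  rw [mul_rpow (by norm_num : (0:ℝ) ≤ 2) hx.le]
  have key : 2 ^ γ * x ^ γ * l (2 * x) ≤ 2 ^ γ * x ^ γ * (θ / 2 ^ γ * l x) :=
    mul_le_mul_of_nonneg_left h.le (by positivity)
  have heq : 2 ^ γ * x ^ γ * (θ / 2 ^ γ * l x) = θ * (x ^ γ * l x) := by
    field_simp
  linarith [key, heq ▸ key]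

/-- If `X` is asymmetric, its right tail is Weibull-tail with parameter `β₁`, its left
tail is Weibull-tail with parameter `β₂`, and `|X|` is Weibull-tail on `ℝ₊` with
parameter `β`, then one of the two tails has parameter exactly `β` and the other has
parameter `≥ β`. -/
theorem wt_abs_tail_parameters {Ω : Type*} [MeasurableSpace Ω]
    (μ : Measure Ω) [IsProbabilityMeasure μ] (X : Ω → ℝ) (β β₁ β₂ : ℝ)
    (hβ : 0 < β) (hβ₁ : 0 < β₁) (hβ₂ : 0 < β₂)
    (hasym : ¬ SymmetricRV μ X)
    (hR : WTpos μ X β₁) (hL : WTpos μ (fun ω => -X ω) β₂)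
    (hAbs : WTpos μ (fun ω => |X ω|) β) :
    (β₁ = β ∧ β ≤ β₂) ∨ (β₂ = β ∧ β ≤ β₁) := by
  obtain ⟨l₁, hl₁, hr₁⟩ := hR
  obtain ⟨l₂, hl₂, hr₂⟩ := hL
  obtain ⟨l, hl, hrabs⟩ := hAbs
  -- sandwich: for x > 0, m x - log 2 ≤ f x ≤ m x where m = min r₁ r₂
  set f : ℝ → ℝ := fun x => x ^ β * l x with hf
  set r₁ : ℝ → ℝ := fun x => x ^ β₁ * l₁ x with hfr₁
  set r₂ : ℝ → ℝ := fun x => x ^ β₂ * l₂ x with hfr₂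
  have hmono : ∀ x : ℝ, 0 < x → f x ≤ min (r₁ x) (r₂ x) := by
    intro x hx
    have key : ∀ (Y : Ω → ℝ) (r : ℝ), (∀ ω, Y ω ≤ |X ω|) →
        survival μ Y x = Real.exp (-r) → f x ≤ r := by
      intro Y r hY hsurv
      have hsub : {ω | x ≤ Y ω} ⊆ {ω | x ≤ |X ω|} := fun ω h => le_trans h (hY ω)
      have hμ : survival μ Y x ≤ survival μ (fun ω => |X ω|) x :=
        ENNReal.toReal_mono (measure_ne_top μ _) (measure_mono hsub)
      rw [hsurv, hrabs x hx] at hμ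
      have h2 := Real.exp_le_exp.mp hμ
      show x ^ β * l x ≤ r
      linarith
    refine le_min (key X (r₁ x) (fun ω => le_abs_self _) (hr₁ x hx))
      (key (fun ω => -X ω) (r₂ x) (fun ω => neg_le_abs _) ?_)
    exact hr₂ x hx
  have hsand : ∀ x : ℝ, 0 < x → min (r₁ x) (r₂ x) ≤ f x + Real.log 2 := by
    intro x hx
    have hsub : {ω | x ≤ |X ω|} ⊆ {ω | x ≤ X ω} ∪ {ω | x ≤ -X ω} := by
      intro ω h
      have h' : x ≤ |X ω| := h
      rcases abs_choice (X ω) with h1 | h1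
      · exact Or.inl (show x ≤ X ω by rw [← h1]; exact h')
      · exact Or.inr (show x ≤ -X ω by rw [← h1]; exact h')
    have hμ : μ {ω | x ≤ |X ω|} ≤ μ {ω | x ≤ X ω} + μ {ω | x ≤ -X ω} :=
      (measure_mono hsub).trans (measure_union_le _ _)
    have hμ' : survival μ (fun ω => |X ω|) x ≤ survival μ X x + survival μ (fun ω => -X ω) x := by
      have h := ENNReal.toReal_mono (by
        exact ENNReal.add_ne_top.mpr ⟨measure_ne_top μ _, measure_ne_top μ _⟩) hμ
      rwa [ENNReal.toReal_add (measure_ne_top μ _) (measure_ne_top μ _)] at h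
    rw [hrabs x hx, hr₁ x hx, hr₂ x hx] at hμ'
    set m := min (r₁ x) (r₂ x) with hm
    have h1 : Real.exp (-(r₁ x)) ≤ Real.exp (-m) :=
      Real.exp_le_exp.mpr (neg_le_neg (min_le_left _ _))
    have h2 : Real.exp (-(r₂ x)) ≤ Real.exp (-m) :=
      Real.exp_le_exp.mpr (neg_le_neg (min_le_right _ _))
    have h3 : Real.exp (-(f x)) ≤ Real.exp (Real.log 2 + -m) := by
      rw [Real.exp_add, Real.exp_log two_pos]
      linarith
    have := Real.exp_le_exp.mp h3
    linarith
  -- positivity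
  have hfpos : ∀ᶠ x in atTop, 0 < f x := by
    filter_upwards [eventually_gt_atTop 0] with x hx
    exact mul_pos (rpow_pos_of_pos hx β) (hl.1 x hx)
  have hmpos : ∀ᶠ x in atTop, 0 < min (r₁ x) (r₂ x) := by
    filter_upwards [eventually_gt_atTop 0] with x hx
    exact lt_min (mul_pos (rpow_pos_of_pos hx β₁) (hl₁.1 x hx))
      (mul_pos (rpow_pos_of_pos hx β₂) (hl₂.1 x hx))
  have hone : ∀ γ : ℝ, 0 < γ → (1:ℝ) < 2 ^ γ := by
    intro γ hγ
    have h : (2:ℝ) ^ (0:ℝ) < 2 ^ γ := (Real.rpow_lt_rpow_left_iff one_lt_two).mpr hγ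
    simpa using h
  -- β ≤ βᵢ
  have hstep : ∀ (γ : ℝ) (lγ : ℝ → ℝ), 0 < γ → SlowlyVarying lγ →
      (∀ x : ℝ, 0 < x → f x ≤ x ^ γ * lγ x) → β ≤ γ := by
    intro γ lγ hγ hlγ hle
    by_contra hlt
    push_neg at hlt
    have h2 : (2:ℝ) ^ γ < 2 ^ β := (Real.rpow_lt_rpow_left_iff one_lt_two).mpr hlt
    set θ₁ : ℝ := ((2:ℝ) ^ γ + 2 ^ β) / 2 with hθ₁
    set θ₂ : ℝ := (θ₁ + 2 ^ β) / 2 with hθ₂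
    have h1θ : 1 < θ₁ := by have := hone γ hγ; have := hone β hβ; rw [hθ₁]; linarith
    have h12 : θ₁ < θ₂ := by rw [hθ₁, hθ₂]; linarith
    have hθ₂β : θ₂ < 2 ^ β := by rw [hθ₂, hθ₁]; linarith
    have hγθ : (2:ℝ) ^ γ < θ₁ := by rw [hθ₁]; linarith
    refine geom_contra f (fun x => x ^ γ * lγ x) θ₁ θ₂ 0 h1θ h12 ?_ ?_ ?_ hfpos
    · exact ratio_lower l hl β θ₂ hθ₂β
    · exact ratio_upper lγ hlγ γ θ₁ hγθ
    · filter_upwards [eventually_gt_atTop 0] with x hx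
      simpa using hle x hx
  have hle1 : β ≤ β₁ := hstep β₁ l₁ hβ₁ hl₁
    (fun x hx => (hmono x hx).trans (min_le_left _ _))
  have hle2 : β ≤ β₂ := hstep β₂ l₂ hβ₂ hl₂
    (fun x hx => (hmono x hx).trans (min_le_right _ _))
  -- min β₁ β₂ ≤ β
  have hminle : min β₁ β₂ ≤ β := by
    by_contra hlt
    push_neg at hlt
    obtain ⟨hlt1, hlt2⟩ := lt_min_iff.mp hlt
    set M : ℝ := min ((2:ℝ) ^ β₁) (2 ^ β₂) with hM
    have hβM : (2:ℝ) ^ β < M :=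
      lt_min ((Real.rpow_lt_rpow_left_iff one_lt_two).mpr hlt1)
        ((Real.rpow_lt_rpow_left_iff one_lt_two).mpr hlt2)
    set θ₁ : ℝ := ((2:ℝ) ^ β + M) / 2 with hθ₁
    set θ₂ : ℝ := (θ₁ + M) / 2 with hθ₂
    have h1θ : 1 < θ₁ := by have := hone β hβ; rw [hθ₁]; linarith
    have h12 : θ₁ < θ₂ := by rw [hθ₁, hθ₂]; linarith
    have hθ₂M : θ₂ < M := by rw [hθ₂, hθ₁]; linarith
    have hβθ : (2:ℝ) ^ β < θ₁ := by rw [hθ₁]; linarith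
    refine geom_contra (fun x => min (r₁ x) (r₂ x)) f θ₁ θ₂ (Real.log 2) h1θ h12 ?_ ?_ ?_ hmpos
    · have e1 := ratio_lower l₁ hl₁ β₁ θ₂ (lt_of_lt_of_le hθ₂M (min_le_left _ _))
      have e2 := ratio_lower l₂ hl₂ β₂ θ₂ (lt_of_lt_of_le hθ₂M (min_le_right _ _))
      filter_upwards [e1, e2] with x h1 h2
      refine le_min ?_ ?_
      · exact le_trans (mul_le_mul_of_nonneg_left (min_le_left _ _)
          (le_trans zero_le_one (le_trans h1θ.le h12.le))) h1
      · exact le_trans (mul_le_mul_of_nonneg_left (min_le_right _ _)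
          (le_trans zero_le_one (le_trans h1θ.le h12.le))) h2
    · exact ratio_upper l hl β θ₁ hβθ
    · filter_upwards [eventually_gt_atTop 0] with x hx
      exact hsand x hx
  rcases le_total β₁ β₂ with h | h
  · exact Or.inl ⟨le_antisymm (by simpa [min_eq_left h] using hminle) hle1, hle2⟩
  · exact Or.inr ⟨le_antisymm (by simpa [min_eq_right h] using hminle) hle2, hle1⟩
end
end

section
/- Let X and Y be random variables (possibly dependent) that are generalized Weibull-tail on ℝ with tail parameters β_x and β_y respectively, and suppose they satisfy the positive dependence condition: there is C > 0 with P(X ≥ 0 | Y ≥ z) ≥ C and P(X ≤ 0 | Y ≤ z) ≥ C for all z ∈ ℝ. Then X + Y is generalized Weibull-tail on ℝ with tail parameter min{β_x, β_y}. -/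
open MeasureTheory Filter Real Finset

noncomputable section

/-!
A survival function `S` is generalized Weibull-tail with parameter `β > 0` exactly when
`exp (-x ^ (β + ε)) ≤ S x ≤ exp (-x ^ (β - ε))` eventually for every `ε > 0`. One direction is a
Potter bound: a slowly varying `l` satisfies `x ^ (-ε) ≲ l x ≲ x ^ ε` along the points `2 ^ m * x₀`
(the definition gives no local boundedness, so only a geometric sequence is available), and this
suffices because `S` is antitone. Conversely, the error `log (-log S (exp u)) - β * u` is `o(u)`,
and the infimum of the lines `u / (k + 1) + C k` dominating it is a majorant with vanishing
increments, i.e. the logarithm of a slowly varying function taken at `log x`.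

In this form the sum is elementary: `P(X + Y ≥ x) ≤ P(X ≥ x / 2) + P(Y ≥ x / 2)` gives the upper
bound, and the lower bound comes from `P(X + Y ≥ x) ≥ C P(Y ≥ x)` when `βy ≤ βx` and from
`P(X + Y ≥ x) ≥ P(X ≥ 2x) - P(-Y ≥ x)` when `βx < βy`. The left tail is the right tail of `-X - Y`.
-/

namespace SlowlyVarying

variable {l : ℝ → ℝ}

lemma inv (hl : SlowlyVarying l) : SlowlyVarying fun x => (l x)⁻¹ := by
  refine ⟨fun x hx => inv_pos.2 (hl.1 x hx), fun t ht => ?_⟩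
  simpa only [inv_div, inv_div_inv, inv_one] using (hl.2 t ht).inv₀ one_ne_zero

lemma eventually_mul_rpow_neg_le (hl : SlowlyVarying l) {δ : ℝ} (hδ : 0 < δ) :
    ∀ᶠ x₀ in atTop, ∃ c > 0, ∀ m : ℕ, c * (2 ^ m * x₀) ^ (-δ) ≤ l (2 ^ m * x₀) := by
  have hr : (2 : ℝ) ^ (-δ) < 1 := Real.rpow_lt_one_of_one_lt_of_neg one_lt_two (neg_lt_zero.2 hδ)
  have hstep : ∀ᶠ x in atTop, (2 : ℝ) ^ (-δ) * l x ≤ l (2 * x) := by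
    filter_upwards [(hl.2 2 two_pos).eventually (eventually_gt_nhds hr), eventually_gt_atTop 0]
      with x hx hx0
    exact ((lt_div_iff₀ (hl.1 x hx0)).1 hx).le
  filter_upwards [eventually_forall_ge_atTop.2 hstep, eventually_gt_atTop 0] with x₀ hstep hx₀
  have hpow : ∀ m : ℕ, ((2 : ℝ) ^ (-δ)) ^ m * l x₀ ≤ l (2 ^ m * x₀) := by
    intro m
    induction m with
    | zero => simp
    | succ n ih =>
      calc ((2 : ℝ) ^ (-δ)) ^ (n + 1) * l x₀ = 2 ^ (-δ) * (((2 : ℝ) ^ (-δ)) ^ n * l x₀) := by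
            ring
        _ ≤ 2 ^ (-δ) * l (2 ^ n * x₀) := by gcongr
        _ ≤ l (2 * (2 ^ n * x₀)) :=
            hstep _ (le_mul_of_one_le_left hx₀.le (one_le_pow₀ one_le_two))
        _ = l (2 ^ (n + 1) * x₀) := by rw [pow_succ', mul_assoc]
  refine ⟨x₀ ^ δ * l x₀, mul_pos (Real.rpow_pos_of_pos hx₀ _) (hl.1 x₀ hx₀), fun m => ?_⟩
  have hswap : ((2 : ℝ) ^ m) ^ (-δ) = ((2 : ℝ) ^ (-δ)) ^ m := by
    rw [← Real.rpow_natCast, ← Real.rpow_natCast, ← Real.rpow_mul two_pos.le,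
      ← Real.rpow_mul two_pos.le, mul_comm]
  have hcancel : x₀ ^ δ * x₀ ^ (-δ) = 1 := by
    rw [Real.rpow_neg hx₀.le, mul_inv_cancel₀ (Real.rpow_pos_of_pos hx₀ δ).ne']
  calc x₀ ^ δ * l x₀ * (2 ^ m * x₀) ^ (-δ)
      = ((2 : ℝ) ^ (-δ)) ^ m * l x₀ * (x₀ ^ δ * x₀ ^ (-δ)) := by
        rw [Real.mul_rpow (by positivity) hx₀.le, hswap]; ring
    _ ≤ l (2 ^ m * x₀) := by rw [hcancel, mul_one]; exact hpow m

lemma eventually_le_mul_rpow (hl : SlowlyVarying l) {δ : ℝ} (hδ : 0 < δ) :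
    ∀ᶠ x₀ in atTop, ∃ C > 0, ∀ m : ℕ, l (2 ^ m * x₀) ≤ C * (2 ^ m * x₀) ^ δ := by
  filter_upwards [hl.inv.eventually_mul_rpow_neg_le hδ, eventually_gt_atTop 0]
    with x₀ ⟨c, hc, h⟩ hx₀
  refine ⟨c⁻¹, inv_pos.2 hc, fun m => ?_⟩
  have hy : 0 < 2 ^ m * x₀ := by positivity
  have := (le_inv_comm₀ (mul_pos hc (Real.rpow_pos_of_pos hy _)) (hl.1 _ hy)).1 (h m)
  rwa [mul_inv, Real.rpow_neg hy.le, inv_inv] at this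

end SlowlyVarying

lemma exists_dyadic_mem_Ico {x₀ x : ℝ} (hx₀ : 0 < x₀) (hx : x₀ ≤ x) :
    ∃ m : ℕ, 2 ^ m * x₀ ≤ x ∧ x < 2 ^ (m + 1) * x₀ := by
  obtain ⟨m, h₁, h₂⟩ := exists_nat_pow_near ((one_le_div hx₀).2 hx) one_lt_two
  exact ⟨m, (le_div_iff₀ hx₀).1 h₁, (div_lt_iff₀ hx₀).1 h₂⟩

namespace Antitone

variable {S : ℝ → ℝ} {x₀ x : ℝ}

lemma le_of_forall_dyadic_le {B : ℝ → ℝ} (hS : Antitone S) (hB : AntitoneOn B (Set.Ioi 0))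
    (hx₀ : 0 < x₀) (h : ∀ m : ℕ, S (2 ^ m * x₀) ≤ B (2 ^ m * x₀)) (hx : x₀ ≤ x) :
    S x ≤ B (x / 2) := by
  obtain ⟨m, hm, hm'⟩ := exists_dyadic_mem_Ico hx₀ hx
  have hx2 : x / 2 ≤ 2 ^ m * x₀ := by rw [pow_succ] at hm'; linarith
  calc S x ≤ S (2 ^ m * x₀) := hS hm
    _ ≤ B (2 ^ m * x₀) := h m
    _ ≤ B (x / 2) := hB (show (0 : ℝ) < x / 2 by linarith) (show (0 : ℝ) < 2 ^ m * x₀ by positivity) hx2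

lemma ge_of_forall_dyadic_ge {A : ℝ → ℝ} (hS : Antitone S) (hA : AntitoneOn A (Set.Ioi 0))
    (hx₀ : 0 < x₀) (h : ∀ m : ℕ, A (2 ^ m * x₀) ≤ S (2 ^ m * x₀)) (hx : x₀ ≤ x) :
    A (2 * x) ≤ S x := by
  obtain ⟨m, hm, hm'⟩ := exists_dyadic_mem_Ico hx₀ hx
  have h2x : 2 ^ (m + 1) * x₀ ≤ 2 * x := by rw [pow_succ]; linarith
  calc A (2 * x) ≤ A (2 ^ (m + 1) * x₀) :=
        hA (show (0 : ℝ) < 2 ^ (m + 1) * x₀ by positivity) (show (0 : ℝ) < 2 * x by linarith) h2x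
    _ ≤ S (2 ^ (m + 1) * x₀) := h _
    _ ≤ S x := hS hm'.le

end Antitone

lemma eventually_mul_rpow_le_rpow (C : ℝ) {k k' a b : ℝ} (hk : 0 < k) (hk' : 0 < k')
    (hab : a < b) : ∀ᶠ x in atTop, C * (k * x) ^ a ≤ (k' * x) ^ b := by
  have hlim : Tendsto (fun x : ℝ => k' ^ b * x ^ (b - a)) atTop atTop :=
    (tendsto_rpow_atTop (sub_pos.2 hab)).const_mul_atTop (Real.rpow_pos_of_pos hk' b)
  filter_upwards [hlim.eventually_ge_atTop (C * k ^ a), eventually_gt_atTop 0] with x hx hx0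
  have hsplit : (k' * x) ^ b = k' ^ b * x ^ (b - a) * x ^ a := by
    rw [Real.mul_rpow hk'.le hx0.le, mul_assoc, ← Real.rpow_add hx0, sub_add_cancel]
  rw [Real.mul_rpow hk.le hx0.le, hsplit, ← mul_assoc]
  exact mul_le_mul_of_nonneg_right hx (Real.rpow_nonneg hx0.le a)

lemma eventually_mul_exp_neg_rpow_le {C k k' a b : ℝ} (hC : 0 < C) (hk : 0 < k) (hk' : 0 < k')
    (ha : 0 < a) (hab : a < b) :
    ∀ᶠ x in atTop, C * exp (-(k * x) ^ b) ≤ exp (-(k' * x) ^ a) := by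
  have hlim : Tendsto (fun x : ℝ => (k' * x) ^ a) atTop atTop :=
    (tendsto_rpow_atTop ha).comp (tendsto_id.const_mul_atTop hk')
  filter_upwards [eventually_mul_rpow_le_rpow 2 hk' hk hab, hlim.eventually_ge_atTop (log C)]
    with x h2 hlog
  rw [← exp_log hC, ← exp_add, exp_le_exp]
  linarith

/-- `GWTpos μ X β` unfolds to `IsGWTail (survival μ X) β`. -/
def IsGWTail (S : ℝ → ℝ) (β : ℝ) : Prop :=
  ∃ l₁ l₂ : ℝ → ℝ, SlowlyVarying l₁ ∧ SlowlyVarying l₂ ∧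
    ∀ᶠ x in atTop, exp (-(x ^ β * l₁ x)) ≤ S x ∧ S x ≤ exp (-(x ^ β * l₂ x))

/-- The `ε`-form of `-log (S x) = x ^ (β + o(1))`. -/
def HasWeibullIndex (S : ℝ → ℝ) (β : ℝ) : Prop :=
  ∀ ε > 0, ∀ᶠ x in atTop, exp (-x ^ (β + ε)) ≤ S x ∧ S x ≤ exp (-x ^ (β - ε))

lemma hasWeibullIndex_of_forall_lt {S : ℝ → ℝ} {β ε₀ : ℝ} (hε₀ : 0 < ε₀)
    (h : ∀ ε, 0 < ε → ε < ε₀ →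
      ∀ᶠ x in atTop, exp (-x ^ (β + ε)) ≤ S x ∧ S x ≤ exp (-x ^ (β - ε))) :
    HasWeibullIndex S β := by
  intro ε hε
  have hε' : min ε (ε₀ / 2) ≤ ε := min_le_left _ _
  filter_upwards [h _ (lt_min hε (half_pos hε₀)) ((min_le_right _ _).trans_lt (half_lt_self hε₀)),
    eventually_ge_atTop 1] with x ⟨hlo, hup⟩ hx
  refine ⟨le_trans ?_ hlo, hup.trans ?_⟩ <;>
    exact exp_le_exp.2 (neg_le_neg (Real.rpow_le_rpow_of_exponent_le hx (by linarith)))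

namespace Antitone

variable {S l : ℝ → ℝ} {β ε : ℝ}

lemma eventually_le_exp_neg_rpow_sub (hS : Antitone S) (hl : SlowlyVarying l)
    (h : ∀ᶠ x in atTop, S x ≤ exp (-(x ^ β * l x))) (hε : 0 < ε) (hεβ : ε < β) :
    ∀ᶠ x in atTop, S x ≤ exp (-x ^ (β - ε)) := by
  obtain ⟨x₀, ⟨hSx₀, c, hc, hlx₀⟩, hx₀⟩ := (((eventually_forall_ge_atTop.2 h).and
    (hl.eventually_mul_rpow_neg_le (half_pos hε))).and (eventually_gt_atTop 0)).exists
  have hdyadic : ∀ m : ℕ, S (2 ^ m * x₀) ≤ exp (-(c * (2 ^ m * x₀) ^ (β - ε / 2))) := by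
    intro m
    have hy : 0 < 2 ^ m * x₀ := by positivity
    refine (hSx₀ _ (le_mul_of_one_le_left hx₀.le (one_le_pow₀ one_le_two))).trans ?_
    rw [exp_le_exp, neg_le_neg_iff, sub_eq_add_neg, Real.rpow_add hy]
    calc c * ((2 ^ m * x₀) ^ β * (2 ^ m * x₀) ^ (-(ε / 2)))
        = (2 ^ m * x₀) ^ β * (c * (2 ^ m * x₀) ^ (-(ε / 2))) := by ring
      _ ≤ (2 ^ m * x₀) ^ β * l (2 ^ m * x₀) :=
        mul_le_mul_of_nonneg_left (hlx₀ m) (Real.rpow_nonneg hy.le _)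
  have hB : AntitoneOn (fun y => exp (-(c * y ^ (β - ε / 2)))) (Set.Ioi 0) :=
    fun a ha b _ hab => exp_le_exp.2 (neg_le_neg (mul_le_mul_of_nonneg_left
      (Real.rpow_le_rpow (le_of_lt ha) hab (by linarith)) hc.le))
  filter_upwards [eventually_ge_atTop x₀, eventually_mul_rpow_le_rpow c⁻¹ one_pos
    (inv_pos.2 two_pos) (show β - ε < β - ε / 2 by linarith)] with x hx habs
  rw [one_mul, inv_mul_le_iff₀ hc, ← div_eq_inv_mul] at habs
  exact (hS.le_of_forall_dyadic_le hB hx₀ hdyadic hx).trans (exp_le_exp.2 (neg_le_neg habs))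

lemma eventually_exp_neg_rpow_add_le (hS : Antitone S) (hl : SlowlyVarying l)
    (h : ∀ᶠ x in atTop, exp (-(x ^ β * l x)) ≤ S x) (hβ : 0 ≤ β) (hε : 0 < ε) :
    ∀ᶠ x in atTop, exp (-x ^ (β + ε)) ≤ S x := by
  obtain ⟨x₀, ⟨hSx₀, C, hC, hlx₀⟩, hx₀⟩ := (((eventually_forall_ge_atTop.2 h).and
    (hl.eventually_le_mul_rpow (half_pos hε))).and (eventually_gt_atTop 0)).exists
  have hdyadic : ∀ m : ℕ, exp (-(C * (2 ^ m * x₀) ^ (β + ε / 2))) ≤ S (2 ^ m * x₀) := by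
    intro m
    have hy : 0 < 2 ^ m * x₀ := by positivity
    refine le_trans ?_ (hSx₀ _ (le_mul_of_one_le_left hx₀.le (one_le_pow₀ one_le_two)))
    rw [exp_le_exp, neg_le_neg_iff, Real.rpow_add hy]
    calc (2 ^ m * x₀) ^ β * l (2 ^ m * x₀)
        ≤ (2 ^ m * x₀) ^ β * (C * (2 ^ m * x₀) ^ (ε / 2)) :=
          mul_le_mul_of_nonneg_left (hlx₀ m) (Real.rpow_nonneg hy.le _)
      _ = C * ((2 ^ m * x₀) ^ β * (2 ^ m * x₀) ^ (ε / 2)) := by ring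
  have hA : AntitoneOn (fun y => exp (-(C * y ^ (β + ε / 2)))) (Set.Ioi 0) :=
    fun a ha b _ hab => exp_le_exp.2 (neg_le_neg (mul_le_mul_of_nonneg_left
      (Real.rpow_le_rpow (le_of_lt ha) hab (by linarith)) hC.le))
  filter_upwards [eventually_ge_atTop x₀, eventually_mul_rpow_le_rpow C two_pos one_pos
    (show β + ε / 2 < β + ε by linarith)] with x hx habs
  rw [one_mul] at habs
  exact (exp_le_exp.2 (neg_le_neg habs)).trans (hS.ge_of_forall_dyadic_ge hA hx₀ hdyadic hx)

end Antitone

lemma IsGWTail.hasWeibullIndex {S : ℝ → ℝ} {β : ℝ} (hS : Antitone S) (hβ : 0 < β)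
    (h : IsGWTail S β) : HasWeibullIndex S β := by
  obtain ⟨l₁, l₂, hl₁, hl₂, hev⟩ := h
  exact hasWeibullIndex_of_forall_lt hβ fun ε hε hεβ =>
    (hS.eventually_exp_neg_rpow_add_le hl₁ (hev.mono fun _ h => h.1) hβ.le hε).and
      (hS.eventually_le_exp_neg_rpow_sub hl₂ (hev.mono fun _ h => h.2) hε hεβ)

def sublinearEnvelope (C : ℕ → ℝ) (u : ℝ) : ℝ :=
  ⨅ k : ℕ, (u / (k + 1) + C k)

section sublinearEnvelope

variable {C : ℕ → ℝ}

lemma bddBelow_range_sublinearEnvelope (hC : ∀ k, 0 ≤ C k) (u : ℝ) :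
    BddBelow (Set.range fun k : ℕ => u / (k + 1) + C k) := by
  refine ⟨min u 0, ?_⟩
  rintro _ ⟨k, rfl⟩
  have hk : (1 : ℝ) ≤ k + 1 := le_add_of_nonneg_left k.cast_nonneg
  have hu : min u 0 ≤ u / (k + 1) := by
    rcases le_total 0 u with hu | hu
    · exact (min_le_right _ _).trans (by positivity)
    · exact (min_le_left _ _).trans ((le_div_iff₀ (by positivity)).2 (by nlinarith))
  linarith [hC k]

lemma sublinearEnvelope_le (hC : ∀ k, 0 ≤ C k) (u : ℝ) (k : ℕ) :
    sublinearEnvelope C u ≤ u / (k + 1) + C k :=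
  ciInf_le (bddBelow_range_sublinearEnvelope hC u) k

lemma monotone_sublinearEnvelope (hC : ∀ k, 0 ≤ C k) : Monotone (sublinearEnvelope C) :=
  fun u v huv => le_ciInf fun k => (sublinearEnvelope_le hC u k).trans (by gcongr)

/-- Beyond `(K + 1)² C K` the slopes `1 / (k + 1)` with `k < K` are no longer active. -/
lemma sublinearEnvelope_add_le (hC : ∀ k, 0 ≤ C k) {K : ℕ} {u c : ℝ} (hc : 0 ≤ c)
    (hu : (K + 1) ^ 2 * C K ≤ u) :
    sublinearEnvelope C (u + c) ≤ sublinearEnvelope C u + c / (K + 1) := by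
  rw [← sub_le_iff_le_add]
  refine le_ciInf fun k => sub_le_iff_le_add.2 ?_
  rcases le_or_gt K k with hKk | hkK
  · have : c / (k + 1) ≤ c / (K + 1) := by gcongr
    calc sublinearEnvelope C (u + c) ≤ (u + c) / (k + 1) + C k := sublinearEnvelope_le hC _ k
      _ = u / (k + 1) + C k + c / (k + 1) := by ring
      _ ≤ u / (k + 1) + C k + c / (K + 1) := by linarith
  · have hu₀ : 0 ≤ u := le_trans (mul_nonneg (sq_nonneg _) (hC K)) hu
    have hkK' : (k : ℝ) + 2 ≤ K + 1 := by
      have : (k : ℝ) + 1 ≤ K := by exact_mod_cast hkK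
      linarith
    have hsteep : u / (K + 1) + C K ≤ u / (k + 1) := by
      rw [div_add' _ _ _ (by positivity), div_le_div_iff₀ (by positivity) (by positivity)]
      nlinarith [mul_le_mul_of_nonneg_left hkK' hu₀,
        mul_le_mul_of_nonneg_left (show (k : ℝ) + 1 ≤ K + 1 by linarith)
          (mul_nonneg (hC K) (by positivity : (0 : ℝ) ≤ K + 1))]
    calc sublinearEnvelope C (u + c) ≤ (u + c) / (K + 1) + C K := sublinearEnvelope_le hC _ K
      _ = u / (K + 1) + C K + c / (K + 1) := by ring
      _ ≤ u / (k + 1) + C k + c / (K + 1) := by linarith [hC k]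

lemma tendsto_sublinearEnvelope_add_sub (hC : ∀ k, 0 ≤ C k) (c : ℝ) :
    Tendsto (fun u => sublinearEnvelope C (u + c) - sublinearEnvelope C u) atTop (nhds 0) := by
  have hnonneg : ∀ c : ℝ, 0 ≤ c →
      Tendsto (fun u => sublinearEnvelope C (u + c) - sublinearEnvelope C u) atTop (nhds 0) := by
    intro c hc
    refine tendsto_order.2 ⟨fun a ha => Eventually.of_forall fun u =>
      ha.trans_le (sub_nonneg.2 (monotone_sublinearEnvelope hC (le_add_of_nonneg_right hc))),
      fun a ha => ?_⟩
    obtain ⟨K, hK⟩ := exists_nat_gt (c / a)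
    filter_upwards [eventually_ge_atTop ((K + 1) ^ 2 * C K)] with u hu
    have hcK : c / (K + 1) < a := by
      rw [div_lt_iff₀ ha] at hK
      rw [div_lt_iff₀ (by positivity)]
      nlinarith
    linarith [sublinearEnvelope_add_le hC hc hu]
  rcases le_total 0 c with hc | hc
  · exact hnonneg c hc
  · have := ((hnonneg (-c) (neg_nonneg.2 hc)).comp
      (tendsto_atTop_add_const_right _ c tendsto_id)).neg
    simpa using this

end sublinearEnvelope

lemma slowlyVarying_exp_comp_log {ψ : ℝ → ℝ}
    (hψ : ∀ c, Tendsto (fun u => ψ (u + c) - ψ u) atTop (nhds 0)) :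
    SlowlyVarying fun x => exp (ψ (log x)) := by
  refine ⟨fun x _ => exp_pos _, fun t ht => ?_⟩
  have hlim := (continuous_exp.tendsto 0).comp ((hψ (log t)).comp tendsto_log_atTop)
  rw [exp_zero] at hlim
  refine hlim.congr' ?_
  filter_upwards [eventually_gt_atTop 0] with x hx
  simp only [Function.comp_apply, exp_sub, log_mul ht.ne' hx.ne', add_comm (log t)]

lemma exists_slowlyVarying_exp_comp_log_le {ρ : ℝ → ℝ} {u₀ : ℝ} (hu₀ : 0 ≤ u₀)
    (hbdd : ∀ U, BddAbove (ρ '' Set.Icc u₀ U)) (hρ : ∀ ε > 0, ∀ᶠ u in atTop, ρ u ≤ ε * u) :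
    ∃ l : ℝ → ℝ, SlowlyVarying l ∧ ∀ᶠ x in atTop, exp (ρ (log x)) ≤ l x := by
  have hC : ∀ k : ℕ, ∃ Ck, 0 ≤ Ck ∧ ∀ u ≥ u₀, ρ u ≤ u / (k + 1) + Ck := by
    intro k
    obtain ⟨U, hU⟩ := (hρ (1 / (k + 1)) (by positivity)).exists_forall_of_atTop
    obtain ⟨B, hB⟩ := hbdd U
    refine ⟨max B 0, le_max_right _ _, fun u hu => ?_⟩
    have hk : 0 ≤ u / (k + 1) := div_nonneg (hu₀.trans hu) (by positivity)
    rcases le_total u U with huU | hUu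
    · linarith [hB (Set.mem_image_of_mem ρ ⟨hu, huU⟩), le_max_left B 0]
    · have := hU u hUu
      rw [one_div_mul_eq_div] at this
      linarith [le_max_right B 0]
  choose C hC₀ hCρ using hC
  refine ⟨_, slowlyVarying_exp_comp_log (tendsto_sublinearEnvelope_add_sub hC₀), ?_⟩
  filter_upwards [tendsto_log_atTop.eventually_ge_atTop u₀] with x hx
  exact exp_le_exp.2 (le_ciInf fun k => hCρ k _ hx)

lemma exists_slowlyVarying_sandwich_exp_comp_log {g : ℝ → ℝ} {β u₀ : ℝ} (hu₀ : 0 ≤ u₀)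
    (hg : MonotoneOn g (Set.Ici u₀)) (hup : ∀ ε > 0, ∀ᶠ u in atTop, g u - β * u ≤ ε * u)
    (hlo : ∀ ε > 0, ∀ᶠ u in atTop, β * u - g u ≤ ε * u) :
    ∃ l₁ l₂ : ℝ → ℝ, SlowlyVarying l₁ ∧ SlowlyVarying l₂ ∧ ∀ᶠ x in atTop,
      x ^ β * l₂ x ≤ exp (g (log x)) ∧ exp (g (log x)) ≤ x ^ β * l₁ x := by
  obtain ⟨l₁, hl₁, hl₁x⟩ := exists_slowlyVarying_exp_comp_log_le (ρ := fun u => g u - β * u) hu₀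
    (fun U => ⟨g U + |β| * U, by
      rintro _ ⟨u, ⟨hu, huU⟩, rfl⟩
      nlinarith [hg hu (hu.trans huU) huU, neg_abs_le β, abs_nonneg β, hu₀.trans hu]⟩) hup
  obtain ⟨l₂, hl₂, hl₂x⟩ := exists_slowlyVarying_exp_comp_log_le (ρ := fun u => β * u - g u) hu₀
    (fun U => ⟨|β| * U - g u₀, by
      rintro _ ⟨u, ⟨hu, huU⟩, rfl⟩
      nlinarith [hg Set.self_mem_Ici hu hu, le_abs_self β, abs_nonneg β, hu₀.trans hu]⟩) hlo
  refine ⟨l₁, fun x => (l₂ x)⁻¹, hl₁, hl₂.inv, ?_⟩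
  filter_upwards [hl₁x, hl₂x, eventually_gt_atTop 0] with x h₁ h₂ hx
  have hxβ : exp (β * log x) = x ^ β := by rw [Real.rpow_def_of_pos hx, mul_comm]
  constructor
  · rw [← div_eq_mul_inv, div_le_iff₀ (hl₂.1 x hx)]
    calc x ^ β = exp (g (log x)) * exp (β * log x - g (log x)) := by rw [← exp_add, ← hxβ]; ring_nf
      _ ≤ exp (g (log x)) * l₂ x := by gcongr
  · calc exp (g (log x)) = exp (β * log x) * exp (g (log x) - β * log x) := by
          rw [← exp_add]; ring_nf
      _ ≤ x ^ β * l₁ x := by rw [hxβ]; gcongr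

lemma exists_slowlyVarying_sandwich {H : ℝ → ℝ} {β x₁ : ℝ} (hpos : ∀ x ≥ x₁, 0 < H x)
    (hmono : MonotoneOn H (Set.Ici x₁)) (hup : ∀ ε > 0, ∀ᶠ x in atTop, H x ≤ x ^ (β + ε))
    (hlo : ∀ ε > 0, ∀ᶠ x in atTop, x ^ (β - ε) ≤ H x) :
    ∃ l₁ l₂ : ℝ → ℝ, SlowlyVarying l₁ ∧ SlowlyVarying l₂ ∧
      ∀ᶠ x in atTop, x ^ β * l₂ x ≤ H x ∧ H x ≤ x ^ β * l₁ x := by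
  have hx₁ : ∀ u ≥ max (log x₁) 0, x₁ ≤ exp u := fun u hu =>
    (le_exp_log x₁).trans (exp_le_exp.2 ((le_max_left _ _).trans hu))
  obtain ⟨l₁, l₂, hl₁, hl₂, hev⟩ := exists_slowlyVarying_sandwich_exp_comp_log
    (g := fun u => log (H (exp u))) (β := β) (le_max_right (log x₁) 0)
    (fun u hu v hv huv =>
      log_le_log (hpos _ (hx₁ u hu)) (hmono (hx₁ u hu) (hx₁ v hv) (exp_le_exp.2 huv)))
    (fun ε hε => by
      filter_upwards [tendsto_exp_atTop.eventually (hup ε hε),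
        tendsto_exp_atTop.eventually (eventually_ge_atTop x₁)] with u hu hu₁
      have := log_le_log (hpos _ hu₁) hu
      rw [log_rpow (exp_pos u), log_exp] at this
      linarith)
    (fun ε hε => by
      filter_upwards [tendsto_exp_atTop.eventually (hlo ε hε)] with u hu
      have := log_le_log (Real.rpow_pos_of_pos (exp_pos u) _) hu
      rw [log_rpow (exp_pos u), log_exp] at this
      linarith)
  refine ⟨l₁, l₂, hl₁, hl₂, ?_⟩
  filter_upwards [hev, eventually_ge_atTop x₁, eventually_gt_atTop 0] with x hx hx₁ hx0
  rwa [exp_log hx0, exp_log (hpos x hx₁)] at hx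

lemma HasWeibullIndex.isGWTail {S : ℝ → ℝ} {β : ℝ} (hS : Antitone S) (hβ : 0 < β)
    (h : HasWeibullIndex S β) : IsGWTail S β := by
  obtain ⟨x₁, hx₁⟩ := ((h (β / 2) (half_pos hβ)).and (eventually_ge_atTop 1)).exists_forall_of_atTop
  have hS₁ : ∀ x ≥ x₁, 0 < S x ∧ S x < 1 := fun x hx => by
    obtain ⟨⟨hlo, hup⟩, hx1⟩ := hx₁ x hx
    refine ⟨(exp_pos _).trans_le hlo, hup.trans_lt (exp_lt_one_iff.2 ?_)⟩
    exact neg_neg_of_pos (Real.rpow_pos_of_pos (by linarith) _)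
  obtain ⟨l₁, l₂, hl₁, hl₂, hev⟩ := exists_slowlyVarying_sandwich (H := fun x => -log (S x))
    (fun x hx => neg_pos.2 (log_neg (hS₁ x hx).1 (hS₁ x hx).2))
    (fun a _ b hb hab => neg_le_neg (log_le_log (hS₁ b hb).1 (hS hab)))
    (fun ε hε => (h ε hε).mono fun x hx => by
      linarith [log_le_log (exp_pos _) hx.1, log_exp (-x ^ (β + ε))])
    (fun ε hε => by
      filter_upwards [h ε hε, eventually_ge_atTop x₁] with x hx hx'
      linarith [log_le_log (hS₁ x hx').1 hx.2, log_exp (-x ^ (β - ε))])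
  refine ⟨l₁, l₂, hl₁, hl₂, ?_⟩
  filter_upwards [hev, eventually_ge_atTop x₁] with x ⟨h₂, h₁⟩ hx
  rw [← exp_log (hS₁ x hx).1]
  exact ⟨exp_le_exp.2 (by linarith), exp_le_exp.2 (by linarith)⟩

section Survival

variable {Ω : Type*} [MeasurableSpace Ω] {μ : Measure Ω} [IsFiniteMeasure μ]

lemma antitone_survival (X : Ω → ℝ) : Antitone (survival μ X) := fun _ _ hab =>
  ENNReal.toReal_mono (measure_ne_top μ _) (measure_mono fun _ h => hab.trans h)

lemma survival_le_add_of_subset {Z X Y : Ω → ℝ} {z x y : ℝ}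
    (h : {ω | z ≤ Z ω} ⊆ {ω | x ≤ X ω} ∪ {ω | y ≤ Y ω}) :
    survival μ Z z ≤ survival μ X x + survival μ Y y := by
  rw [survival, survival, survival, ← ENNReal.toReal_add (measure_ne_top μ _) (measure_ne_top μ _)]
  exact ENNReal.toReal_mono (ENNReal.add_ne_top.2 ⟨measure_ne_top μ _, measure_ne_top μ _⟩)
    ((measure_mono h).trans (measure_union_le _ _))

lemma survival_add_le (X Y : Ω → ℝ) (x : ℝ) :
    survival μ (fun ω => X ω + Y ω) x ≤ survival μ X (x / 2) + survival μ Y (x / 2) :=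
  survival_le_add_of_subset fun ω (hω : x ≤ X ω + Y ω) => by
    rcases le_or_gt (x / 2) (X ω) with h | h
    · exact Or.inl h
    · exact Or.inr (show x / 2 ≤ Y ω by linarith)

lemma survival_two_mul_le (X Y : Ω → ℝ) (x : ℝ) :
    survival μ X (2 * x) ≤ survival μ (fun ω => X ω + Y ω) x + survival μ (fun ω => -Y ω) x :=
  survival_le_add_of_subset fun ω (hω : 2 * x ≤ X ω) => by
    rcases le_or_gt x (-Y ω) with h | h
    · exact Or.inr h
    · exact Or.inl (show x ≤ X ω + Y ω by linarith)

lemma mul_survival_le_survival_add {X Y : Ω → ℝ} {C z : ℝ}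
    (hPD : C * (μ {ω | z ≤ Y ω}).toReal ≤ (μ {ω | 0 ≤ X ω ∧ z ≤ Y ω}).toReal) :
    C * survival μ Y z ≤ survival μ (fun ω => X ω + Y ω) z :=
  hPD.trans (ENNReal.toReal_mono (measure_ne_top μ _) (measure_mono fun ω ⟨hX, hY⟩ =>
    show z ≤ X ω + Y ω by linarith))

variable {X Y : Ω → ℝ} {β βx βy ε : ℝ}

lemma eventually_survival_add_le_exp (hX : HasWeibullIndex (survival μ X) βx)
    (hY : HasWeibullIndex (survival μ Y) βy) (hβx : β ≤ βx) (hβy : β ≤ βy) (hε : 0 < ε)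
    (hεβ : ε < β) :
    ∀ᶠ x in atTop, survival μ (fun ω => X ω + Y ω) x ≤ exp (-x ^ (β - ε)) := by
  have hhalf : Tendsto (fun x : ℝ => x / 2) atTop atTop := tendsto_id.atTop_div_const two_pos
  filter_upwards [hhalf.eventually (hX (ε / 2) (half_pos hε)),
    hhalf.eventually (hY (ε / 2) (half_pos hε)), eventually_ge_atTop 2,
    eventually_mul_exp_neg_rpow_le two_pos (inv_pos.2 two_pos) one_pos (sub_pos.2 hεβ)
      (show β - ε < β - ε / 2 by linarith)] with x hXx hYx hx habs
  rw [one_mul, ← div_eq_inv_mul] at habs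
  have hmono : ∀ γ ≥ β, exp (-(x / 2) ^ (γ - ε / 2)) ≤ exp (-(x / 2) ^ (β - ε / 2)) :=
    fun γ hγ => exp_le_exp.2 (neg_le_neg
      (Real.rpow_le_rpow_of_exponent_le (by linarith) (by linarith)))
  calc survival μ (fun ω => X ω + Y ω) x ≤ survival μ X (x / 2) + survival μ Y (x / 2) :=
        survival_add_le X Y x
    _ ≤ exp (-(x / 2) ^ (βx - ε / 2)) + exp (-(x / 2) ^ (βy - ε / 2)) := add_le_add hXx.2 hYx.2
    _ ≤ 2 * exp (-(x / 2) ^ (β - ε / 2)) := by linarith [hmono βx hβx, hmono βy hβy]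
    _ ≤ exp (-x ^ (β - ε)) := habs

lemma eventually_exp_le_survival_add_of_pd (hY : HasWeibullIndex (survival μ Y) β) (hβ : 0 ≤ β)
    {C : ℝ} (hC : 0 < C)
    (hPD : ∀ z, C * (μ {ω | z ≤ Y ω}).toReal ≤ (μ {ω | 0 ≤ X ω ∧ z ≤ Y ω}).toReal)
    (hε : 0 < ε) :
    ∀ᶠ x in atTop, exp (-x ^ (β + ε)) ≤ survival μ (fun ω => X ω + Y ω) x := by
  filter_upwards [hY (ε / 2) (half_pos hε), eventually_mul_exp_neg_rpow_le (inv_pos.2 hC)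
    one_pos one_pos (by positivity : 0 < β + ε / 2) (show β + ε / 2 < β + ε by linarith)]
    with x hYx habs
  simp only [one_mul] at habs
  calc exp (-x ^ (β + ε)) = C * (C⁻¹ * exp (-x ^ (β + ε))) := by field_simp
    _ ≤ C * survival μ Y x := by gcongr; exact habs.trans hYx.1
    _ ≤ survival μ (fun ω => X ω + Y ω) x := mul_survival_le_survival_add (hPD x)

lemma eventually_exp_le_survival_add_of_lt (hX : HasWeibullIndex (survival μ X) βx)
    (hY : HasWeibullIndex (survival μ fun ω => -Y ω) βy) (hβx : 0 ≤ βx) (hε : 0 < ε)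
    (hεβ : ε < βy - βx) :
    ∀ᶠ x in atTop, exp (-x ^ (βx + ε)) ≤ survival μ (fun ω => X ω + Y ω) x := by
  have hdouble : Tendsto (fun x : ℝ => 2 * x) atTop atTop := tendsto_id.const_mul_atTop two_pos
  filter_upwards [hdouble.eventually (hX (ε / 2) (half_pos hε)), hY (βy - βx - ε) (by linarith),
    eventually_mul_exp_neg_rpow_le two_pos one_pos two_pos (by positivity : 0 < βx + ε / 2)
      (show βx + ε / 2 < βx + ε by linarith)] with x hXx hYx habs
  rw [show βy - (βy - βx - ε) = βx + ε by ring] at hYx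
  simp only [one_mul] at habs
  linarith [survival_two_mul_le (μ := μ) X Y x, hXx.1, hYx.2]

lemma HasWeibullIndex.survival_add (hX : HasWeibullIndex (survival μ X) βx)
    (hY : HasWeibullIndex (survival μ Y) βy) (hY' : HasWeibullIndex (survival μ fun ω => -Y ω) βy)
    (hβx : 0 < βx) (hβy : 0 < βy) {C : ℝ} (hC : 0 < C)
    (hPD : ∀ z, C * (μ {ω | z ≤ Y ω}).toReal ≤ (μ {ω | 0 ≤ X ω ∧ z ≤ Y ω}).toReal) :
    HasWeibullIndex (survival μ fun ω => X ω + Y ω) (min βx βy) := by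
  rcases le_or_gt βy βx with h | h
  · rw [min_eq_right h]
    exact hasWeibullIndex_of_forall_lt hβy fun ε hε hεβ =>
      (eventually_exp_le_survival_add_of_pd hY hβy.le hC hPD hε).and
        (eventually_survival_add_le_exp hX hY h le_rfl hε hεβ)
  · rw [min_eq_left h.le]
    exact hasWeibullIndex_of_forall_lt (lt_min hβx (sub_pos.2 h)) fun ε hε hεβ =>
      (eventually_exp_le_survival_add_of_lt hX hY' hβx.le hε (hεβ.trans_le (min_le_right _ _))).and
        (eventually_survival_add_le_exp hX hY le_rfl h.le hε (hεβ.trans_le (min_le_left _ _)))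

lemma gwtPos_add_of_pd (hX : GWTpos μ X βx) (hY : GWTpos μ Y βy)
    (hY' : GWTpos μ (fun ω => -Y ω) βy) (hβx : 0 < βx) (hβy : 0 < βy) {C : ℝ} (hC : 0 < C)
    (hPD : ∀ z, C * (μ {ω | z ≤ Y ω}).toReal ≤ (μ {ω | 0 ≤ X ω ∧ z ≤ Y ω}).toReal) :
    GWTpos μ (fun ω => X ω + Y ω) (min βx βy) :=
  HasWeibullIndex.isGWTail (antitone_survival _) (lt_min hβx hβy) <|
    (IsGWTail.hasWeibullIndex (antitone_survival X) hβx hX).survival_add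
      (IsGWTail.hasWeibullIndex (antitone_survival Y) hβy hY)
      (IsGWTail.hasWeibullIndex (antitone_survival _) hβy hY') hβx hβy hC hPD

end Survival

/-- Sum of two (possibly dependent) generalized Weibull-tail variables on `ℝ`
satisfying the positive dependence condition is generalized Weibull-tail with parameter
the minimum of the two parameters. -/
theorem gwtReal_add_of_pd {Ω : Type*} [MeasurableSpace Ω]
    (μ : Measure Ω) [IsProbabilityMeasure μ] (X Y : Ω → ℝ) (βx βy : ℝ)
    (hβx : 0 < βx) (hβy : 0 < βy)
    (hX : GWTreal μ X βx) (hY : GWTreal μ Y βy)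
    (C : ℝ) (hC : 0 < C)
    (hPD : ∀ z : ℝ,
      C * (μ {ω | z ≤ Y ω}).toReal ≤ (μ {ω | 0 ≤ X ω ∧ z ≤ Y ω}).toReal ∧
      C * (μ {ω | Y ω ≤ z}).toReal ≤ (μ {ω | X ω ≤ 0 ∧ Y ω ≤ z}).toReal) :
    GWTreal μ (fun ω => X ω + Y ω) (min βx βy) := by
  refine ⟨gwtPos_add_of_pd hX.1 hY.1 hY.2 hβx hβy hC fun z => (hPD z).1, ?_⟩
  have hPD' : ∀ z, C * (μ {ω | z ≤ -Y ω}).toReal ≤ (μ {ω | 0 ≤ -X ω ∧ z ≤ -Y ω}).toReal :=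
    fun z => by simpa only [le_neg, neg_nonneg] using (hPD (-z)).2
  have hY' : GWTpos μ (fun ω => -(-Y ω)) βy := by simpa only [neg_neg] using hY.1
  simpa only [neg_add] using gwtPos_add_of_pd hX.2 hY.2 hY' hβx hβy hC hPD'
end
end

section
/- Let X and Y be independent symmetric random variables with X generalized Weibull-tail on ℝ with parameter 1/θ_x and Y generalized Weibull-tail on ℝ with parameter 1/θ_y. Then the product XY is a symmetric random variable that is generalized Weibull-tail on ℝ with tail parameter 1/(θ_x + θ_y). -/
/-!
Put `p = θx / (θx + θy)` and `q = θy / (θx + θy)`, so that `z = z ^ p * z ^ q` and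
`(z ^ p) ^ (1 / θx) = (z ^ q) ^ (1 / θy) = z ^ (1 / (θx + θy))`. By independence
`P(XY ≥ z) ≥ P(X ≥ z ^ p) P(Y ≥ z ^ q)`, and `XY ≥ z` forces `|X| ≥ z ^ p` or `|Y| ≥ z ^ q`, so
`P(XY ≥ z) ≤ P(|X| ≥ z ^ p) + P(|Y| ≥ z ^ q)`. Since slow variation survives sums, halved minima
and composition with `z ↦ z ^ c`, both bounds are again Weibull-type with parameter
`1 / (θx + θy)`. The left tail is the right tail of `(-X) Y`, and `XY` is symmetric because
`(X, Y)` and `(-X, Y)` have the same law.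
-/

open MeasureTheory Filter Real Finset

noncomputable section

open Topology

lemma tendsto_div_nhds_one_iff_eventually_le_mul {α : Type*} {l : Filter α} {u v : α → ℝ}
    (hv : ∀ᶠ x in l, 0 < v x) :
    Tendsto (fun x => u x / v x) l (𝓝 1) ↔
      ∀ c > 1, ∀ᶠ x in l, v x ≤ c * u x ∧ u x ≤ c * v x := by
  constructor
  · intro h c hc
    filter_upwards [h.eventually (Ioo_mem_nhds (inv_lt_one_of_one_lt₀ hc) hc), hv] with x hx hvx
    rw [lt_div_iff₀ hvx, inv_mul_lt_iff₀ (by linarith), div_lt_iff₀ hvx] at hx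
    exact ⟨hx.1.le, hx.2.le⟩
  · intro h
    rw [Metric.tendsto_nhds]
    intro ε hε
    filter_upwards [h (1 + ε / 2) (by linarith), hv] with x ⟨hvu, huv⟩ hvx
    rw [Real.dist_eq, abs_sub_lt_iff, sub_lt_iff_lt_add', div_lt_iff₀ hvx,
      sub_lt_comm, lt_div_iff₀ hvx]
    constructor <;> nlinarith

namespace SlowlyVarying

lemma eventually_le_mul {l : ℝ → ℝ} (hl : SlowlyVarying l) {t : ℝ} (ht : 0 < t) {c : ℝ}
    (hc : 1 < c) : ∀ᶠ x in atTop, l x ≤ c * l (t * x) ∧ l (t * x) ≤ c * l x :=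
  (tendsto_div_nhds_one_iff_eventually_le_mul (eventually_gt_atTop 0 |>.mono hl.1)).1
    (hl.2 t ht) c hc

lemma map₂ (op : ℝ → ℝ → ℝ) (hpos : ∀ a b, 0 < a → 0 < b → 0 < op a b)
    (hhom : ∀ c a b, 0 < c → op (c * a) (c * b) = c * op a b)
    (hmono : ∀ a a' b b', a ≤ a' → b ≤ b' → op a b ≤ op a' b')
    {f g : ℝ → ℝ} (hf : SlowlyVarying f) (hg : SlowlyVarying g) :
    SlowlyVarying (fun x => op (f x) (g x)) := by
  refine ⟨fun x hx => hpos _ _ (hf.1 x hx) (hg.1 x hx), fun t ht => ?_⟩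
  rw [tendsto_div_nhds_one_iff_eventually_le_mul
    (eventually_gt_atTop 0 |>.mono fun x hx => hpos _ _ (hf.1 x hx) (hg.1 x hx))]
  intro c hc
  filter_upwards [hf.eventually_le_mul ht hc, hg.eventually_le_mul ht hc] with x hfx hgx
  have hc0 : 0 < c := by linarith
  constructor
  · exact (hmono _ _ _ _ hfx.1 hgx.1).trans_eq (hhom c _ _ hc0)
  · exact (hmono _ _ _ _ hfx.2 hgx.2).trans_eq (hhom c _ _ hc0)

lemma add {f g : ℝ → ℝ} (hf : SlowlyVarying f) (hg : SlowlyVarying g) :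
    SlowlyVarying (fun x => f x + g x) :=
  map₂ (· + ·) (fun _ _ => add_pos) (fun c a b _ => (mul_add c a b).symm)
    (fun _ _ _ _ => add_le_add) hf hg

lemma half_min {f g : ℝ → ℝ} (hf : SlowlyVarying f) (hg : SlowlyVarying g) :
    SlowlyVarying (fun x => min (f x) (g x) / 2) :=
  map₂ (fun a b => min a b / 2) (fun _ _ ha hb => half_pos (lt_min ha hb))
    (fun c a b hc => by rw [← mul_min_of_nonneg _ _ hc.le, mul_div_assoc])
    (fun _ _ _ _ ha hb => by gcongr) hf hg

lemma comp_rpow {l : ℝ → ℝ} (hl : SlowlyVarying l) {c : ℝ} (hc : 0 < c) :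
    SlowlyVarying (fun x => l (x ^ c)) := by
  refine ⟨fun x hx => hl.1 _ (rpow_pos_of_pos hx c), fun t ht => ?_⟩
  refine ((hl.2 (t ^ c) (rpow_pos_of_pos ht c)).comp (tendsto_rpow_atTop hc)).congr' ?_
  filter_upwards [eventually_ge_atTop 0] with x hx
  simp only [Function.comp_apply, mul_rpow ht.le hx]

end SlowlyVarying

section Survival

variable {Ω : Type*} [MeasurableSpace Ω] {μ : Measure Ω} {X Y : Ω → ℝ}

lemma tendsto_survival_atTop [IsFiniteMeasure μ] (hmX : Measurable X) :
    Tendsto (survival μ X) atTop (𝓝 0) := by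
  have hempty : ⋂ x : ℝ, {ω | x ≤ X ω} = ∅ :=
    Set.iInter_eq_empty_iff.2 fun ω => ⟨X ω + 1, by simp⟩
  have h := tendsto_measure_iInter_atTop (μ := μ) (s := fun x : ℝ => {ω | x ≤ X ω})
    (fun _ => (measurableSet_le measurable_const hmX).nullMeasurableSet)
    (fun _ _ hxy _ hω => hxy.trans hω) ⟨0, measure_ne_top μ _⟩
  rw [hempty, measure_empty] at h
  exact (ENNReal.tendsto_toReal ENNReal.zero_ne_top).comp h

lemma survival_abs_le [IsFiniteMeasure μ] (X : Ω → ℝ) (x : ℝ) :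
    survival μ (fun ω => |X ω|) x ≤ survival μ X x + survival μ (fun ω => -X ω) x := by
  have hunion : {ω | x ≤ |X ω|} = {ω | x ≤ X ω} ∪ {ω | x ≤ -X ω} := by
    ext ω
    exact le_abs (b := X ω)
  simp only [survival, ← measureReal_def, hunion]
  exact measureReal_union_le _ _

lemma survival_mul_le [IsFiniteMeasure μ] (X Y : Ω → ℝ) (a b : ℝ) :
    survival μ (fun ω => X ω * Y ω) (a * b) ≤
      survival μ (fun ω => |X ω|) a + survival μ (fun ω => |Y ω|) b := by
  have hsub : {ω | a * b ≤ X ω * Y ω} ⊆ {ω | a ≤ |X ω|} ∪ {ω | b ≤ |Y ω|} := by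
    intro ω hω
    by_contra! h
    simp only [Set.mem_union, Set.mem_ofPred_eq, not_or, not_le] at h hω
    have := mul_lt_mul'' h.1 h.2 (abs_nonneg _) (abs_nonneg _)
    linarith [le_abs_self (X ω * Y ω), abs_mul (X ω) (Y ω)]
  simp only [survival, ← measureReal_def]
  exact (measureReal_mono hsub).trans (measureReal_union_le _ _)

lemma mul_survival_le_survival_mul [IsFiniteMeasure μ] (hXY : ProbabilityTheory.IndepFun X Y μ)
    {a b : ℝ} (ha : 0 ≤ a) (hb : 0 ≤ b) :
    survival μ X a * survival μ Y b ≤ survival μ (fun ω => X ω * Y ω) (a * b) := by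
  have hsub : {ω | a ≤ X ω} ∩ {ω | b ≤ Y ω} ⊆ {ω | a * b ≤ X ω * Y ω} :=
    fun ω ⟨hx, hy⟩ => mul_le_mul hx hy hb (ha.trans hx)
  have hprod := hXY.measure_inter_preimage_eq_mul _ _
    (measurableSet_Ici (a := a)) (measurableSet_Ici (a := b))
  simp only [survival, ← ENNReal.toReal_mul]
  exact ENNReal.toReal_mono (measure_ne_top μ _) (hprod ▸ measure_mono hsub)

lemma SymmetricRV.mul_of_indepFun [IsFiniteMeasure μ] (hX : SymmetricRV μ X)
    (hmX : Measurable X) (hmY : Measurable Y) (hXY : ProbabilityTheory.IndepFun X Y μ) :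
    SymmetricRV μ (fun ω => X ω * Y ω) := by
  have hlaw : ProbabilityTheory.IdentDistrib X (fun ω => -X ω) μ μ :=
    ⟨hmX.aemeasurable, hmX.neg.aemeasurable, hX⟩
  have hpair := hlaw.prodMk (.refl hmY.aemeasurable) hXY
    (hXY.comp measurable_neg measurable_id)
  simpa only [SymmetricRV, Function.comp_def, neg_mul] using
    (hpair.comp (u := fun p : ℝ × ℝ => p.1 * p.2) (by fun_prop)).map_eq

lemma GWTreal.neg {β : ℝ} (hX : GWTreal μ X β) : GWTreal μ (fun ω => -X ω) β :=
  ⟨hX.2, by simpa only [neg_neg] using hX.1⟩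

end Survival

def WeibullLowerBound (f : ℝ → ℝ) (β : ℝ) : Prop :=
  ∃ l : ℝ → ℝ, SlowlyVarying l ∧ ∀ᶠ x in atTop, exp (-(x ^ β * l x)) ≤ f x

def WeibullUpperBound (f : ℝ → ℝ) (β : ℝ) : Prop :=
  ∃ l : ℝ → ℝ, SlowlyVarying l ∧ ∀ᶠ x in atTop, f x ≤ exp (-(x ^ β * l x))

lemma gwtPos_iff {Ω : Type*} [MeasurableSpace Ω] {μ : Measure Ω} {X : Ω → ℝ} {β : ℝ} :
    GWTpos μ X β ↔ WeibullLowerBound (survival μ X) β ∧ WeibullUpperBound (survival μ X) β := by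
  constructor
  · rintro ⟨l₁, l₂, hl₁, hl₂, h⟩
    exact ⟨⟨l₁, hl₁, h.mono fun _ => And.left⟩, ⟨l₂, hl₂, h.mono fun _ => And.right⟩⟩
  · rintro ⟨⟨l₁, hl₁, h₁⟩, ⟨l₂, hl₂, h₂⟩⟩
    exact ⟨l₁, l₂, hl₁, hl₂, h₁.and h₂⟩

namespace WeibullLowerBound

variable {f g : ℝ → ℝ} {β : ℝ}

lemma mono (hf : WeibullLowerBound f β) (hfg : ∀ᶠ x in atTop, f x ≤ g x) :
    WeibullLowerBound g β :=
  let ⟨l, hl, h⟩ := hf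
  ⟨l, hl, (h.and hfg).mono fun _ hx => hx.1.trans hx.2⟩

lemma mul (hf : WeibullLowerBound f β) (hg : WeibullLowerBound g β) :
    WeibullLowerBound (fun x => f x * g x) β := by
  obtain ⟨l₁, hl₁, h₁⟩ := hf
  obtain ⟨l₂, hl₂, h₂⟩ := hg
  refine ⟨fun x => l₁ x + l₂ x, hl₁.add hl₂, ?_⟩
  filter_upwards [h₁, h₂] with x hx₁ hx₂
  calc exp (-(x ^ β * (l₁ x + l₂ x))) = exp (-(x ^ β * l₁ x)) * exp (-(x ^ β * l₂ x)) := by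
        rw [← exp_add]; ring_nf
    _ ≤ f x * g x := mul_le_mul hx₁ hx₂ (exp_pos _).le ((exp_pos _).le.trans hx₁)

lemma comp_rpow (hf : WeibullLowerBound f β) {c : ℝ} (hc : 0 < c) :
    WeibullLowerBound (fun x => f (x ^ c)) (c * β) := by
  obtain ⟨l, hl, h⟩ := hf
  refine ⟨fun x => l (x ^ c), hl.comp_rpow hc, ?_⟩
  filter_upwards [(tendsto_rpow_atTop hc).eventually h, eventually_ge_atTop 0] with x hx hx0
  rwa [← rpow_mul hx0] at hx

end WeibullLowerBound

lemma le_exp_neg_half_of_le_mul_exp {p u C : ℝ} (hC : 0 < C) (hp : p ≤ C * exp (-u))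
    (hpC : p ≤ C⁻¹) : p ≤ exp (-(u / 2)) := by
  rcases le_total (log C) (u / 2) with hu | hu
  · calc p ≤ C * exp (-u) := hp
      _ = exp (log C - u) := by rw [sub_eq_add_neg, exp_add, exp_log hC]
      _ ≤ exp (-(u / 2)) := exp_le_exp.2 (by linarith)
  · calc p ≤ C⁻¹ := hpC
      _ = exp (-log C) := by rw [exp_neg, exp_log hC]
      _ ≤ exp (-(u / 2)) := exp_le_exp.2 (by linarith)

namespace WeibullUpperBound

variable {f g : ℝ → ℝ} {β : ℝ}

lemma comp_rpow (hf : WeibullUpperBound f β) {c : ℝ} (hc : 0 < c) :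
    WeibullUpperBound (fun x => f (x ^ c)) (c * β) := by
  obtain ⟨l, hl, h⟩ := hf
  refine ⟨fun x => l (x ^ c), hl.comp_rpow hc, ?_⟩
  filter_upwards [(tendsto_rpow_atTop hc).eventually h, eventually_ge_atTop 0] with x hx hx0
  rwa [← rpow_mul hx0] at hx

/-- Halving `min l₁ l₂` absorbs the factor `2` in `h ≤ 2 exp (-x ^ β min l₁ l₂)` once
`x ^ β min l₁ l₂ ≥ 2 log 2`; otherwise the new bound exceeds `1 / 2 ≥ h`. -/
lemma of_le_add {h : ℝ → ℝ} (hf : WeibullUpperBound f β) (hg : WeibullUpperBound g β)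
    (hfg : ∀ᶠ x in atTop, h x ≤ f x + g x) (hsmall : ∀ᶠ x in atTop, h x ≤ 2⁻¹) :
    WeibullUpperBound h β := by
  obtain ⟨l₁, hl₁, h₁⟩ := hf
  obtain ⟨l₂, hl₂, h₂⟩ := hg
  refine ⟨fun x => min (l₁ x) (l₂ x) / 2, hl₁.half_min hl₂, ?_⟩
  filter_upwards [h₁, h₂, hfg, hsmall, eventually_ge_atTop 0] with x hx₁ hx₂ hx hxs hx0
  have hmin : ∀ l, min (l₁ x) (l₂ x) ≤ l →
      exp (-(x ^ β * l)) ≤ exp (-(x ^ β * min (l₁ x) (l₂ x))) :=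
    fun l hl => exp_le_exp.2 (neg_le_neg (mul_le_mul_of_nonneg_left hl (rpow_nonneg hx0 β)))
  rw [← mul_div_assoc]
  refine le_exp_neg_half_of_le_mul_exp two_pos ?_ hxs
  linarith [hmin _ (min_le_left _ _), hmin _ (min_le_right _ _)]

end WeibullUpperBound

section Product

variable {Ω : Type*} [MeasurableSpace Ω] {μ : Measure Ω} [IsFiniteMeasure μ] {X Y : Ω → ℝ}

lemma weibullUpperBound_survival_abs (hmX : Measurable X) {β : ℝ} (hX : GWTreal μ X β) :
    WeibullUpperBound (survival μ fun ω => |X ω|) β :=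
  (gwtPos_iff.1 hX.1).2.of_le_add (gwtPos_iff.1 hX.2).2 (.of_forall (survival_abs_le X))
    ((tendsto_survival_atTop hmX.abs).eventually_le_const (by norm_num))

theorem gwtPos_mul_of_indepFun (hmX : Measurable X) (hmY : Measurable Y) {θx θy : ℝ}
    (hθx : 0 < θx) (hθy : 0 < θy) (hXY : ProbabilityTheory.IndepFun X Y μ)
    (hX : GWTreal μ X (1 / θx)) (hY : GWTreal μ Y (1 / θy)) :
    GWTpos μ (fun ω => X ω * Y ω) (1 / (θx + θy)) := by
  have hθ : 0 < θx + θy := add_pos hθx hθy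
  have hpX : θx / (θx + θy) * (1 / θx) = 1 / (θx + θy) := by field_simp
  have hqY : θy / (θx + θy) * (1 / θy) = 1 / (θx + θy) := by field_simp
  have hpq : θx / (θx + θy) + θy / (θx + θy) = 1 := by field_simp
  set p := θx / (θx + θy)
  set q := θy / (θx + θy)
  have hp : 0 < p := div_pos hθx hθ
  have hq : 0 < q := div_pos hθy hθ
  have hsplit : ∀ᶠ z : ℝ in atTop, z ^ p * z ^ q = z := by
    filter_upwards [eventually_gt_atTop 0] with z hz
    rw [← rpow_add hz, hpq, rpow_one]
  refine gwtPos_iff.2 ⟨?_, ?_⟩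
  · have hlowX := (gwtPos_iff.1 hX.1).1.comp_rpow hp
    have hlowY := (gwtPos_iff.1 hY.1).1.comp_rpow hq
    rw [hpX] at hlowX
    rw [hqY] at hlowY
    refine (hlowX.mul hlowY).mono ?_
    filter_upwards [hsplit, eventually_ge_atTop 0] with z hz hz0
    simpa only [hz] using
      mul_survival_le_survival_mul hXY (rpow_nonneg hz0 p) (rpow_nonneg hz0 q)
  · have hupX := (weibullUpperBound_survival_abs hmX hX).comp_rpow hp
    have hupY := (weibullUpperBound_survival_abs hmY hY).comp_rpow hq
    rw [hpX] at hupX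
    rw [hqY] at hupY
    refine hupX.of_le_add hupY ?_
      ((tendsto_survival_atTop (hmX.mul hmY)).eventually_le_const (by norm_num))
    filter_upwards [hsplit] with z hz
    simpa only [hz] using survival_mul_le X Y (z ^ p) (z ^ q)

end Product

theorem gwtReal_mul_of_indep_symm_general {Ω : Type*} [MeasurableSpace Ω]
    (μ : Measure Ω) [IsProbabilityMeasure μ] (X Y : Ω → ℝ)
    (hmX : Measurable X) (hmY : Measurable Y)
    (θx θy : ℝ) (hθx : 0 < θx) (hθy : 0 < θy)
    (hindep : ProbabilityTheory.IndepFun X Y μ)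
    (hsymX : SymmetricRV μ X)
    (hX : GWTreal μ X (1 / θx)) (hY : GWTreal μ Y (1 / θy)) :
    SymmetricRV μ (fun ω => X ω * Y ω) ∧
      GWTreal μ (fun ω => X ω * Y ω) (1 / (θx + θy)) := by
  refine ⟨hsymX.mul_of_indepFun hmX hmY hindep,
    gwtPos_mul_of_indepFun hmX hmY hθx hθy hindep hX hY, ?_⟩
  simpa only [neg_mul] using gwtPos_mul_of_indepFun (X := fun ω => -X ω) hmX.neg hmY hθx hθy
    (hindep.comp measurable_neg measurable_id) hX.neg hY

/-- Product of two independent symmetric generalized Weibull-tail variables on `ℝ` with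
parameters `1/θx` and `1/θy` is a symmetric generalized Weibull-tail variable on `ℝ`
with parameter `1/(θx + θy)`. -/
theorem gwtReal_mul_of_indep_symm {Ω : Type*} [MeasurableSpace Ω]
    (μ : Measure Ω) [IsProbabilityMeasure μ] (X Y : Ω → ℝ)
    (hmX : Measurable X) (hmY : Measurable Y)
    (θx θy : ℝ) (hθx : 0 < θx) (hθy : 0 < θy)
    (hindep : ProbabilityTheory.IndepFun X Y μ)
    (hsymX : SymmetricRV μ X) (hsymY : SymmetricRV μ Y)
    (hX : GWTreal μ X (1 / θx)) (hY : GWTreal μ Y (1 / θy)) :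
    SymmetricRV μ (fun ω => X ω * Y ω) ∧
      GWTreal μ (fun ω => X ω * Y ω) (1 / (θx + θy)) :=
  gwtReal_mul_of_indep_symm_general μ X Y hmX hmY θx θy hθx hθy hindep hsymX hX hY
end
end

section
/- Let W₁, …, W_N be mutually independent symmetric random variables, independent of random variables X₁, …, X_N (which may be mutually dependent). Then the products W₁X₁, …, W_N X_N satisfy the positive dependence condition with constant C = 1/2^{N−1}: for all z ∈ ℝ, P(W₁X₁ ≥ 0, …, W_{N−1}X_{N−1} ≥ 0 | W_N X_N ≥ z) ≥ 1/2^{N−1}, and analogously for the left tails. -/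
open MeasureTheory Filter Real Finset

noncomputable section

/-!
Flipping the signs of any set `t` of the weights leaves the joint law of the weights and the
`X_i` unchanged, by symmetry and independence. Every outcome of `{W_N X_N ∈ T}` lies in the event
`{W_i X_i ∈ S for i < N, W_N X_N ∈ T}` after flipping the weights `i < N` with `W_i X_i ∉ S`,
provided `-a ∈ S` whenever `a ∉ S`. A union bound over the `2^N` possible flips gives the theorem
with `S = [0, ∞)` or `S = (-∞, 0]`.
-/

open ProbabilityTheory

section SignFlip

variable {ι : Type*} [DecidableEq ι]

def signFlip (t : Finset ι) (w : ι → ℝ) : ι → ℝ := fun i => if i ∈ t then -w i else w i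

lemma measurable_signFlip (t : Finset ι) : Measurable (signFlip t) :=
  measurable_pi_iff.2 fun i => by
    by_cases hi : i ∈ t <;> simp only [signFlip, hi, if_true, if_false] <;> fun_prop

variable [Fintype ι] {Ω : Type*} [MeasurableSpace Ω] {μ : Measure Ω} {W : ι → Ω → ℝ}

lemma map_signFlip_eq (t : Finset ι) (hmW : ∀ i, Measurable (W i))
    (hWindep : iIndepFun W μ) (hWsym : ∀ i ∈ t, SymmetricRV μ (W i)) :
    μ.map (fun ω => signFlip t (fun i => W i ω)) = μ.map (fun ω i => W i ω) := by
  set flip : ι → ℝ → ℝ := fun i y => if i ∈ t then -y else y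
  have hmflip : ∀ i, Measurable (flip i) := fun i => by
    by_cases hi : i ∈ t <;> simp only [flip, hi, if_true, if_false] <;> fun_prop
  have hmarginal : ∀ i, μ.map (fun ω => flip i (W i ω)) = μ.map (W i) := fun i => by
    by_cases hi : i ∈ t
    · simpa [flip, hi] using (hWsym i hi).symm
    · simp [flip, hi]
  calc μ.map (fun ω => signFlip t (fun i => W i ω))
      = μ.map (fun ω i => flip i (W i ω)) := rfl
    _ = Measure.pi fun i => μ.map (fun ω => flip i (W i ω)) :=
        (hWindep.comp flip hmflip).map_fun_eq_pi_map fun i =>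
          ((hmflip i).comp (hmW i)).aemeasurable
    _ = μ.map (fun ω i => W i ω) := by
        simp_rw [hmarginal]
        exact (hWindep.map_fun_eq_pi_map fun i => (hmW i).aemeasurable).symm

lemma map_signFlip_prod_eq {β : Type*} [MeasurableSpace β] {X : Ω → β} (t : Finset ι)
    (hmW : ∀ i, Measurable (W i)) (hmX : Measurable X) (hWindep : iIndepFun W μ)
    (hWX : IndepFun (fun ω i => W i ω) X μ) (hWsym : ∀ i ∈ t, SymmetricRV μ (W i)) :
    μ.map (fun ω => (signFlip t (fun i => W i ω), X ω)) =
      μ.map (fun ω => ((fun i => W i ω), X ω)) := by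
  have := hWindep.isProbabilityMeasure
  have hmWv : Measurable fun ω i => W i ω := measurable_pi_iff.2 hmW
  have hmflipped : Measurable fun ω => signFlip t (fun i => W i ω) :=
    (measurable_signFlip t).comp hmWv
  rw [(hWX.comp (measurable_signFlip t) measurable_id).map_prod_eq_prod_map_map
      hmflipped.aemeasurable hmX.aemeasurable,
    hWX.map_prod_eq_prod_map_map hmWv.aemeasurable hmX.aemeasurable,
    map_signFlip_eq t hmW hWindep hWsym]

end SignFlip

section PositiveDependence

variable {ι : Type*} [Fintype ι] [DecidableEq ι] {Ω : Type*} [MeasurableSpace Ω] {μ : Measure Ω}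
  {W X : ι → Ω → ℝ}

lemma measure_le_two_pow_card_mul_measure (s : Finset ι) {j : ι} (hj : j ∉ s)
    (hmW : ∀ i, Measurable (W i)) (hmX : ∀ i, Measurable (X i)) (hWindep : iIndepFun W μ)
    (hWX : IndepFun (fun ω i => W i ω) (fun ω i => X i ω) μ)
    (hWsym : ∀ i ∈ s, SymmetricRV μ (W i))
    {S T : Set ℝ} (hS : MeasurableSet S) (hT : MeasurableSet T) (hSneg : ∀ a, a ∈ S ∨ -a ∈ S) :
    μ {ω | W j ω * X j ω ∈ T} ≤
      2 ^ s.card * μ {ω | (∀ i ∈ s, W i ω * X i ω ∈ S) ∧ W j ω * X j ω ∈ T} := by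
  classical
  set A : Set ((ι → ℝ) × (ι → ℝ)) := {p | (∀ i ∈ s, p.1 i * p.2 i ∈ S) ∧ p.1 j * p.2 j ∈ T}
  have hmA : MeasurableSet A := by
    have hmul : ∀ i, Measurable fun p : (ι → ℝ) × (ι → ℝ) => p.1 i * p.2 i := fun i => by
      fun_prop
    simp only [A, Set.ofPred_and, Set.ofPred_forall]
    exact (MeasurableSet.biInter s.countable_toSet fun i _ => hmul i hS).inter (hmul j hT)
  set F : Finset ι → Ω → (ι → ℝ) × (ι → ℝ) :=
    fun t ω => (signFlip t (fun i => W i ω), fun i => X i ω)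
  have hflip : ∀ t ∈ s.powerset, μ (F t ⁻¹' A) = μ (F ∅ ⁻¹' A) := fun t ht => by
    have hmF : ∀ t, Measurable (F t) := fun t =>
      ((measurable_signFlip t).comp (measurable_pi_iff.2 hmW)).prodMk (measurable_pi_iff.2 hmX)
    rw [← Measure.map_apply (hmF t) hmA, ← Measure.map_apply (hmF ∅) hmA]
    congr 1
    have hsym_t : ∀ i ∈ t, SymmetricRV μ (W i) := fun i hi =>
      hWsym i (Finset.mem_powerset.1 ht hi)
    rw [map_signFlip_prod_eq t hmW (measurable_pi_iff.2 hmX) hWindep hWX hsym_t,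
      map_signFlip_prod_eq ∅ hmW (measurable_pi_iff.2 hmX) hWindep hWX (by simp)]
  have hcover : {ω | W j ω * X j ω ∈ T} ⊆ ⋃ t ∈ s.powerset, F t ⁻¹' A := fun ω hω => by
    refine Set.mem_biUnion (x := s.filter fun i => W i ω * X i ω ∉ S)
      (Finset.mem_powerset.2 (Finset.filter_subset _ _)) ⟨fun i hi => ?_, ?_⟩
    · by_cases hiS : W i ω * X i ω ∈ S
      · simp [F, signFlip, hiS]
      · simpa [F, signFlip, hi, hiS] using (hSneg _).resolve_left hiS
    · simpa [F, signFlip, hj] using hω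
  calc μ {ω | W j ω * X j ω ∈ T}
      ≤ ∑ t ∈ s.powerset, μ (F t ⁻¹' A) :=
        (measure_mono hcover).trans (measure_biUnion_finset_le _ _)
    _ = 2 ^ s.card * μ {ω | (∀ i ∈ s, W i ω * X i ω ∈ S) ∧ W j ω * X j ω ∈ T} := by
        rw [Finset.sum_congr rfl hflip, Finset.sum_const, Finset.card_powerset, nsmul_eq_mul]
        simp [F, A, signFlip]

end PositiveDependence

/-- Products of mutually independent symmetric weights `W_i` with (possibly dependent)
variables `X_i`, the vector of weights being independent of the vector of the `X_i`,
satisfy the positive dependence condition with constant `C = 1/2^{N-1}`. -/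
theorem pd_of_symmetric_weights {Ω : Type*} [MeasurableSpace Ω]
    (μ : Measure Ω) [IsProbabilityMeasure μ] (N : ℕ)
    (W X : Fin (N + 1) → Ω → ℝ)
    (hmW : ∀ i, Measurable (W i)) (hmX : ∀ i, Measurable (X i))
    (hWindep : ProbabilityTheory.iIndepFun (m := fun _ => Real.measurableSpace) W μ)
    (hWX : ProbabilityTheory.IndepFun (fun ω (i : Fin (N + 1)) => W i ω)
      (fun ω (i : Fin (N + 1)) => X i ω) μ)
    (hWsym : ∀ i, SymmetricRV μ (W i)) :
    ∀ z : ℝ,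
      (1 / 2 ^ N : ℝ) * (μ {ω | z ≤ W (Fin.last N) ω * X (Fin.last N) ω}).toReal ≤
        (μ {ω | (∀ i : Fin N, 0 ≤ W i.castSucc ω * X i.castSucc ω) ∧
            z ≤ W (Fin.last N) ω * X (Fin.last N) ω}).toReal ∧
      (1 / 2 ^ N : ℝ) * (μ {ω | W (Fin.last N) ω * X (Fin.last N) ω ≤ z}).toReal ≤
        (μ {ω | (∀ i : Fin N, W i.castSucc ω * X i.castSucc ω ≤ 0) ∧
            W (Fin.last N) ω * X (Fin.last N) ω ≤ z}).toReal := by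
  have key : ∀ {S T : Set ℝ}, MeasurableSet S → MeasurableSet T → (∀ a, a ∈ S ∨ -a ∈ S) →
      (1 / 2 ^ N : ℝ) * (μ {ω | W (Fin.last N) ω * X (Fin.last N) ω ∈ T}).toReal ≤
        (μ {ω | (∀ i : Fin N, W i.castSucc ω * X i.castSucc ω ∈ S) ∧
          W (Fin.last N) ω * X (Fin.last N) ω ∈ T}).toReal := by
    intro S T hS hT hSneg
    have h := measure_le_two_pow_card_mul_measure (Finset.univ.map Fin.castSuccEmb)
      (j := Fin.last N) (by simp [Fin.castSucc_ne_last]) hmW hmX hWindep hWX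
      (fun i _ => hWsym i) hS hT hSneg
    simp only [Finset.card_map, Finset.card_univ, Fintype.card_fin, Finset.mem_map,
      Finset.mem_univ, true_and, Fin.coe_castSuccEmb, forall_exists_index,
      forall_apply_eq_imp_iff] at h
    rw [one_div, inv_mul_le_iff₀ (by positivity)]
    simpa using ENNReal.toReal_mono (by finiteness) h
  intro z
  exact ⟨key measurableSet_Ici measurableSet_Ici fun a => (le_total 0 a).imp id neg_nonneg.2,
    key measurableSet_Iic measurableSet_Iic fun a => (le_total a 0).imp id neg_nonpos.2⟩
end
end
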